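/- (Reparametrization and Taylor coefficient of the frequencies, equations (5.5), (5.7).) Let n ≥ 3 be an integer and let f_n(z) := (1/4)·√((n−2−nz)² − 4zⁿ), which is C^∞ on a neighborhood of z = 0 since (n−2−nz)² − 4zⁿ > 0 there. Then: (i) for every γ > 1, setting z := ((γ−1)/(γ+1))², one has the identity (nγ/(1+γ)² − 1/2)² − (1/4)((γ−1)/(γ+1))^{2n} = (1/16)·[(n−2−nz)² − 4zⁿ]; in particular, whenever the left-hand side is positive, Ω_n(γ) = f_n(z); moreover Ω_γ = (1−z)/4. (ii) The n-th derivative of f_n at z = 0 equals −n!/(2(n−2)). -/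

import Mathlib

open Real

/-- `Ω_γ := γ/(1+γ)²`. -/
noncomputable def OmG (γ : ℝ) : ℝ := γ / (1 + γ) ^ 2

/-- `κ_n(γ) := ((γ−1)/(γ+1))ⁿ`. -/
noncomputable def kap (n : ℕ) (γ : ℝ) : ℝ := ((γ - 1) / (γ + 1)) ^ n

/-- `μ_n^+(γ) := nΩ_γ − 1/2 + κ_n(γ)/2`. -/
noncomputable def muP (n : ℕ) (γ : ℝ) : ℝ := n * OmG γ - 1 / 2 + kap n γ / 2

/-- `μ_n^-(γ) := nΩ_γ − 1/2 − κ_n(γ)/2`. -/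
noncomputable def muM (n : ℕ) (γ : ℝ) : ℝ := n * OmG γ - 1 / 2 - kap n γ / 2

/-- `Ω_n(γ) := √(μ_n^+(γ) μ_n^-(γ))`. -/
noncomputable def Om (n : ℕ) (γ : ℝ) : ℝ := Real.sqrt (muP n γ * muM n γ)

/-- `f_n(z) := (1/4)·√((n−2−nz)² − 4zⁿ)`. -/
noncomputable def fRe (n : ℕ) (z : ℝ) : ℝ :=
  (1 / 4) * Real.sqrt (((n : ℝ) - 2 - n * z) ^ 2 - 4 * z ^ n)

/-- The smooth factor `r(z) = 1/((n-2-nz) + √((n-2-nz)² - 4zⁿ))`. -/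
noncomputable def rfun (n : ℕ) (z : ℝ) : ℝ :=
  (((n : ℝ) - 2 - n * z) + Real.sqrt (((n : ℝ) - 2 - n * z) ^ 2 - 4 * z ^ n))⁻¹

/-- Iterated "reduced" derivatives of `zⁿ · r(z)`. -/
noncomputable def Rf (n : ℕ) : ℕ → ℝ → ℝ
  | 0 => rfun n
  | (k+1) => fun z => ((n : ℝ) - k) * Rf n k z + z * deriv (Rf n k) z

/-- The affine part's iterated derivatives. -/
noncomputable def Af (n : ℕ) : ℕ → ℝ → ℝ
  | 0 => fun z => ((n : ℝ) - 2 - n * z) / 4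
  | 1 => fun _ => -(n : ℝ) / 4
  | (_+2) => fun _ => 0

lemma key (n : ℕ) (hn : 3 ≤ n) :
    iteratedDeriv n (fRe n) 0 = -(n.factorial : ℝ) / (2 * ((n : ℝ) - 2)) := by
  have hn2 : (0:ℝ) < (n:ℝ) - 2 := by
    have : (3:ℝ) ≤ n := by exact_mod_cast hn
    linarith
  set a : ℝ → ℝ := fun z => (n : ℝ) - 2 - n * z with ha
  set q : ℝ → ℝ := fun z => a z ^ 2 - 4 * z ^ n with hq
  set s : Set ℝ := {z | 0 < a z ∧ 0 < q z} with hs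
  have hca : Continuous a := by fun_prop
  have hcq : Continuous q := by fun_prop
  have hso : IsOpen s := by
    have : s = a ⁻¹' (Set.Ioi 0) ∩ q ⁻¹' (Set.Ioi 0) := rfl
    rw [this]
    exact (isOpen_Ioi.preimage hca).inter (isOpen_Ioi.preimage hcq)
  have h0 : (0:ℝ) ∈ s := by
    constructor
    · simpa [ha] using hn2
    · have : q 0 = ((n:ℝ) - 2) ^ 2 := by
        simp [hq, ha, zero_pow (by omega : n ≠ 0)]
      rw [this]; positivity
  -- positivity facts on s
  have hden : ∀ z ∈ s, 0 < a z + Real.sqrt (q z) := fun z hz =>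
    lt_of_lt_of_le hz.1 (le_add_of_nonneg_right (Real.sqrt_nonneg _))
  -- smoothness of r on s
  have hr : ContDiffOn ℝ (⊤ : ℕ∞) (rfun n) s := by
    intro z hz
    have hqz : ContDiffAt ℝ (⊤ : ℕ∞) q z := by
      apply ContDiffAt.sub
      · exact ((contDiff_const.sub (contDiff_const.mul contDiff_id)).pow 2).contDiffAt
      · exact (contDiff_const.mul (contDiff_id.pow n)).contDiffAt
    have haz : ContDiffAt ℝ (⊤ : ℕ∞) a z := by
      exact (contDiff_const.sub (contDiff_const.mul contDiff_id)).contDiffAt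
    have hsq : ContDiffAt ℝ (⊤ : ℕ∞) (fun z => Real.sqrt (q z)) z :=
      (contDiffAt_sqrt hz.2.ne').comp z hqz
    exact ((haz.add hsq).inv (hden z hz).ne').contDiffWithinAt
  -- the main induction
  have main : ∀ k, k ≤ n →
      ContDiffOn ℝ (⊤ : ℕ∞) (Rf n k) s ∧
      Set.EqOn (iteratedDeriv k (fRe n)) (fun z => Af n k z - z ^ (n - k) * Rf n k z) s := by
    intro k
    induction k with
    | zero =>
      intro _
      refine ⟨hr, ?_⟩
      intro z hz
      have hqnn : (0:ℝ) ≤ q z := hz.2.le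
      have hsq : Real.sqrt (q z) ^ 2 = q z := Real.sq_sqrt hqnn
      have hdz : a z + Real.sqrt (q z) ≠ 0 := (hden z hz).ne'
      show (1/4) * Real.sqrt (q z) = a z / 4 - z ^ (n - 0) * rfun n z
      have hrz : rfun n z = (a z + Real.sqrt (q z))⁻¹ := rfl
      have hsq' : Real.sqrt (q z) ^ 2 = a z ^ 2 - 4 * z ^ n := Real.sq_sqrt hqnn
      have hmul : (a z - Real.sqrt (q z)) * (a z + Real.sqrt (q z)) = 4 * z ^ n := by
        linear_combination (-1 : ℝ) * hsq'
      have h2 : z ^ n * (a z + Real.sqrt (q z))⁻¹ = (a z - Real.sqrt (q z)) / 4 := by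
        rw [mul_inv_eq_iff_eq_mul₀ hdz]
        linear_combination (-1/4 : ℝ) * hmul
      rw [hrz, Nat.sub_zero, h2]
      ring
    | succ k ih =>
      intro hk1
      have hkn : k < n := hk1
      obtain ⟨ihC, ihE⟩ := ih hkn.le
      have hRd : ContDiffOn ℝ (⊤ : ℕ∞) (deriv (Rf n k)) s :=
        ihC.deriv_of_isOpen hso (mod_cast le_top)
      have hC : ContDiffOn ℝ (⊤ : ℕ∞) (Rf n (k+1)) s := by
        show ContDiffOn ℝ (⊤ : ℕ∞) (fun z => ((n : ℝ) - k) * Rf n k z + z * deriv (Rf n k) z) s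
        exact (contDiffOn_const.mul ihC).add (contDiffOn_id.mul hRd)
      refine ⟨hC, ?_⟩
      intro z hz
      have hev : iteratedDeriv k (fRe n) =ᶠ[nhds z]
          (fun z => Af n k z - z ^ (n - k) * Rf n k z) :=
        Filter.eventuallyEq_of_mem (hso.mem_nhds hz) ihE
      have hdRk : DifferentiableAt ℝ (Rf n k) z :=
        (ihC.differentiableOn (by simp)).differentiableAt (hso.mem_nhds hz)
      have hA : DifferentiableAt ℝ (Af n k) z ∧ deriv (Af n k) z = Af n (k+1) z := by
        match k with
        | 0 =>
          constructor
          · show DifferentiableAt ℝ (fun z => ((n : ℝ) - 2 - n * z) / 4) z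
            fun_prop
          · show deriv (fun z => ((n : ℝ) - 2 - n * z) / 4) z = -(n:ℝ)/4
            have : (fun z : ℝ => ((n : ℝ) - 2 - n * z) / 4)
                = fun z : ℝ => ((n:ℝ) - 2)/4 + (-(n:ℝ)/4) * z := by
              funext z; ring
            rw [this, deriv_const_add, deriv_const_mul _ differentiableAt_fun_id]
            simp
        | 1 => exact ⟨differentiableAt_const _, by simp [Af]⟩
        | (m+2) => exact ⟨differentiableAt_const _, by simp [Af]⟩
      calc iteratedDeriv (k+1) (fRe n) z
          = deriv (iteratedDeriv k (fRe n)) z := by rw [iteratedDeriv_succ]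
        _ = deriv (fun z => Af n k z - z ^ (n - k) * Rf n k z) z := hev.deriv_eq
        _ = Af n (k+1) z - z ^ (n - (k+1)) * Rf n (k+1) z := by
            rw [deriv_fun_sub hA.1 ((differentiableAt_pow _).fun_mul hdRk),
              deriv_fun_mul (differentiableAt_pow _) hdRk, hA.2, deriv_pow_field]
            have hnk : n - k = (n - (k+1)) + 1 := by omega
            show Af n (k+1) z - ((n - k : ℕ) * z ^ (n - k - 1) * Rf n k z
                + z ^ (n - k) * deriv (Rf n k) z)
              = Af n (k+1) z - z ^ (n - (k+1)) *
                (((n : ℝ) - k) * Rf n k z + z * deriv (Rf n k) z)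
            have hcast : ((n - k : ℕ) : ℝ) = (n : ℝ) - k := by
              rw [Nat.cast_sub hkn.le]
            rw [hcast, hnk]
            have h1 : n - (k+1) + 1 - 1 = n - (k+1) := by omega
            rw [h1, pow_succ]
            ring
  -- value of Rf at 0
  have hr0 : rfun n 0 = (2 * ((n : ℝ) - 2))⁻¹ := by
    have h1 : Real.sqrt (((n : ℝ) - 2 - n * 0) ^ 2 - 4 * (0:ℝ) ^ n)
        = (n : ℝ) - 2 := by
      rw [show ((n : ℝ) - 2 - n * 0) ^ 2 - 4 * (0:ℝ) ^ n = ((n:ℝ) - 2) ^ 2 by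
        simp [zero_pow (by omega : n ≠ 0)]]
      exact Real.sqrt_sq hn2.le
    rw [rfun, h1]
    ring_nf
  have hRf0 : ∀ k, k ≤ n → Rf n k 0 = (n.descFactorial k : ℝ) * rfun n 0 := by
    intro k
    induction k with
    | zero => intro _; simp [Rf]
    | succ k ih =>
      intro hk1
      have hkn : k < n := hk1
      show ((n : ℝ) - k) * Rf n k 0 + 0 * deriv (Rf n k) 0 = _
      rw [ih hkn.le, Nat.descFactorial_succ, Nat.cast_mul,
        Nat.cast_sub hkn.le]
      ring
  have hfinal := (main n le_rfl).2 h0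
  rw [hfinal]
  have hAn : Af n n 0 = 0 := by
    match n, hn with
    | (m+3), _ => simp [Af]
  simp only [hAn, Nat.sub_self, pow_zero, one_mul]
  rw [hRf0 n le_rfl, hr0, Nat.descFactorial_self]
  field_simp
  ring

/-- Reparametrization and Taylor coefficient of the frequencies (equations (5.5), (5.7)). -/
theorem reparametrization (n : ℕ) (hn : 3 ≤ n) :
    -- (i)
    (∀ γ : ℝ, 1 < γ →
      (((n : ℝ) * γ / (1 + γ) ^ 2 - 1 / 2) ^ 2
          - (1 / 4) * ((γ - 1) / (γ + 1)) ^ (2 * n)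
        = (1 / 16) * (((n : ℝ) - 2 - n * (((γ - 1) / (γ + 1)) ^ 2)) ^ 2
            - 4 * (((γ - 1) / (γ + 1)) ^ 2) ^ n)) ∧
      (0 < ((n : ℝ) * γ / (1 + γ) ^ 2 - 1 / 2) ^ 2
            - (1 / 4) * ((γ - 1) / (γ + 1)) ^ (2 * n) →
        Om n γ = fRe n (((γ - 1) / (γ + 1)) ^ 2)) ∧
      OmG γ = (1 - ((γ - 1) / (γ + 1)) ^ 2) / 4) ∧
    -- (ii)
    iteratedDeriv n (fRe n) 0 = -(n.factorial : ℝ) / (2 * ((n : ℝ) - 2)) := by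
  refine ⟨fun γ hγ => ?_, key n hn⟩
  have hγ1 : γ + 1 ≠ 0 := by linarith
  have h1γ : (1 + γ) ≠ 0 := by linarith
  have hid : ((n : ℝ) * γ / (1 + γ) ^ 2 - 1 / 2) ^ 2
          - (1 / 4) * ((γ - 1) / (γ + 1)) ^ (2 * n)
        = (1 / 16) * (((n : ℝ) - 2 - n * (((γ - 1) / (γ + 1)) ^ 2)) ^ 2
            - 4 * (((γ - 1) / (γ + 1)) ^ 2) ^ n) := by
    rw [pow_mul]
    have hA : ((n : ℝ) * γ / (1 + γ) ^ 2 - 1 / 2)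
        = (1/4) * ((n : ℝ) - 2 - n * (((γ - 1) / (γ + 1)) ^ 2)) := by
      field_simp
      ring
    rw [hA]
    ring
  refine ⟨hid, fun _ => ?_, ?_⟩
  · have hprod : muP n γ * muM n γ
        = ((n : ℝ) * γ / (1 + γ) ^ 2 - 1 / 2) ^ 2
          - (1 / 4) * ((γ - 1) / (γ + 1)) ^ (2 * n) := by
      simp only [muP, muM, OmG, kap]
      rw [pow_mul, pow_right_comm]
      ring
    rw [Om, fRe, hprod, hid]
    rw [show (1:ℝ)/16 = (1/4)^2 by norm_num,
      Real.sqrt_mul (by positivity : (0:ℝ) ≤ ((1:ℝ)/4)^2),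
      Real.sqrt_sq (by norm_num : (0:ℝ) ≤ (1:ℝ)/4)]
  · rw [OmG]
    field_simp
    ring
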